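/- arXiv:1806.01918 — 2 statements merged into one kernel-verified Lean document; each statement's English description precedes it below -/
import Mathlib

section
/- The Zaslavsky collection γ defined by γ_{n,n'} = (Σ_{j=0}^{n} C(n', j)) e_{n'} for n' ∈ ℕ₊ and n ∈ {0, …, n'} satisfies the bound condition, i.e. γ ∈ Γ. -/
open Matrix

noncomputable def relu {n n' : ℕ} (W : Matrix (Fin n') (Fin n) ℝ) (b : Fin n' → ℝ)
    (x : Fin n → ℝ) : Fin n' → ℝ :=
  fun i => max 0 (W i ⬝ᵥ x + b i)

noncomputable def sig {n n' : ℕ} (W : Matrix (Fin n') (Fin n) ℝ) (b : Fin n' → ℝ)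
    (x : Fin n → ℝ) : Fin n' → Bool :=
  fun i => decide (0 < W i ⬝ᵥ x + b i)

/-- Forward pass through the first `l` layers: `fwd n W b l = h_l ∘ ⋯ ∘ h_1`. -/
noncomputable def fwd (n : ℕ → ℕ) (W : ∀ l : ℕ, Matrix (Fin (n (l + 1))) (Fin (n l)) ℝ)
    (b : ∀ l : ℕ, Fin (n (l + 1)) → ℝ) : (l : ℕ) → (Fin (n 0) → ℝ) → (Fin (n l) → ℝ)
  | 0 => fun x => x
  | l + 1 => fun x => relu (W l) (b l) (fwd n W b l x)

/-- Multi signature of length `m`: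
`msig n W b m x = (S_{h_1}(x), S_{h_2}(h_1(x)), …, S_{h_m}(h_{m-1}∘⋯∘h_1(x)))`. -/
noncomputable def msig (n : ℕ → ℕ) (W : ∀ l : ℕ, Matrix (Fin (n (l + 1))) (Fin (n l)) ℝ)
    (b : ∀ l : ℕ, Fin (n (l + 1)) → ℝ) (m : ℕ) (x : Fin (n 0) → ℝ) :
    ∀ l : Fin m, Fin (n (l.val + 1)) → Bool :=
  fun l => sig (W l.val) (b l.val) (fwd n W b l.val x)

/-- Number of active units of a binary vector `s`, i.e. `|s|`. -/
def cnt {k : ℕ} (s : Fin k → Bool) : ℕ := (Finset.univ.filter fun j => s j = true).card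

/-- `min(n_0, |s_1|, …, |s_i|)` for a length-`i` multi signature `s`. -/
def minAct (n : ℕ → ℕ) (i : ℕ) (s : ∀ l : Fin i, Fin (n (l.val + 1)) → Bool) : ℕ :=
  Finset.univ.fold min (n 0) (fun l : Fin i => cnt (s l))


/-- Tail sum `∑_{j ≥ J} v j` of a histogram. -/
noncomputable def tailSum (v : ℕ → ℕ) (J : ℕ) : ℕ :=
  ∑' j : ℕ, if J ≤ j then v j else 0

/-- The partial order `≼` on histograms: `v ≼ w` iff all tail sums of `v` are dominated by
those of `w`. -/
def hle (v w : ℕ → ℕ) : Prop := ∀ J : ℕ, tailSum v J ≤ tailSum w J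

/-- The histogram `e_i` with a single entry `1` at index `i`. -/
def histE (i : ℕ) : ℕ → ℕ := fun j => if j = i then 1 else 0

/-- The activation histogram `ℋ_{n'}(𝒮)`: entry `j` counts the signatures `s ∈ 𝒮` with
`|s| = j` active units. -/
noncomputable def actHist (n' : ℕ) (S : Set (Fin n' → Bool)) : ℕ → ℕ :=
  fun j => {s ∈ S | cnt s = j}.ncard

/-- The clipping function `cl_k`: all mass at indices `≥ k` is moved to index `k`. -/
noncomputable def clip (k : ℕ) (v : ℕ → ℕ) : ℕ → ℕ :=
  fun i => if i < k then v i else if i = k then tailSum v k else 0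

/-- The bound condition for a collection `γ` (accessed as `γ n' n` for `n ≤ n'`, `n' ≥ 1`):
every `γ n' n` is a histogram in `V` (finitely supported); for every ReLU layer function
`h ∈ RL(n, n')` with `0 ≤ n ≤ n'` the activation histogram of its attained signatures is
dominated by `γ n' n` (for `n = 0` the layer functions are the constants, with activation
histogram `e_0`); and `γ n' n ≼ γ n' m` whenever `n ≤ m ≤ n'`. -/
def BoundCondition (γ : ℕ → ℕ → ℕ → ℕ) : Prop :=
  (∀ n' n : ℕ, 0 < n' → n ≤ n' → (Function.support (γ n' n)).Finite) ∧
  (∀ n' : ℕ, 0 < n' → hle (histE 0) (γ n' 0)) ∧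
  (∀ n n' : ℕ, 0 < n → 0 < n' → n ≤ n' →
    ∀ (W : Matrix (Fin n') (Fin n) ℝ) (b : Fin n' → ℝ),
      hle (actHist n' (Set.range (sig W b))) (γ n' n)) ∧
  (∀ n' n m : ℕ, 0 < n' → n ≤ m → m ≤ n' → hle (γ n' n) (γ n' m))

/-- The transition function `φ^{(γ)}_{n'} : V → V`,
`v ↦ ∑_{m} v_m · cl_{min(m,n')}(γ_{min(m,n'), n'})`. -/
noncomputable def phi (γ : ℕ → ℕ → ℕ → ℕ) (n' : ℕ) (v : ℕ → ℕ) : ℕ → ℕ :=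
  fun i => ∑' m : ℕ, v m * clip (min m n') (γ n' (min m n')) i

/-- The dimension histogram `H̃^{(i)}(U)`: entry `j` counts the length-`i` multi signatures
`(s_1, …, s_i) ∈ U` with `min(n_0, |s_1|, …, |s_i|) = j`. -/
noncomputable def dimHist (n : ℕ → ℕ) (i : ℕ)
    (U : Set (∀ l : Fin i, Fin (n (l.val + 1)) → Bool)) : ℕ → ℕ :=
  fun j => {u ∈ U | minAct n i u = j}.ncard


/-- The Zaslavsky collection `γ_{n,n'} = (∑_{j=0}^{n} C(n', j)) e_{n'}`
(accessed as `zasGamma n' n`). -/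
def zasGamma (n' n : ℕ) : ℕ → ℕ :=
  fun i => if i = n' then ∑ j ∈ Finset.range (n + 1), n'.choose j else 0

/-! Everything reduces to the layer bound: a ReLU layer `ℝⁿ → ℝ^{n'}` attains at most
`∑_{j ≤ n} C(n', j)` signatures, and `γ_{n,n'}` puts exactly that mass at the top index `n'`.
By the Sauer–Shelah lemma it suffices that the family of active sets shatters no set `t` of
more than `n` neurons. If it did, the rows `W i`, `i ∈ t`, would satisfy a nontrivial relation
`∑ c i • W i = 0`, so that `∑ c i * (W i ⬝ᵥ x + b i)` is constant in `x`. At a point whose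
active set is `{i | 0 < c i}` every term is nonnegative, so the constant is `≥ 0`, and `> 0`
if some `c i > 0`; doing the same for `-c` forces `c = 0`. -/

open Finset

lemma mul_nonneg_of_pos_iff {c f : ℝ} (h : 0 < f ↔ 0 < c) : 0 ≤ c * f := by
  rcases lt_or_ge 0 c with hc | hc
  · exact (mul_pos hc (h.2 hc)).le
  · exact mul_nonneg_of_nonpos_of_nonpos hc (not_lt.1 fun hf => hc.not_gt (h.1 hf))

section SignPattern

variable {ι : Type*} [Fintype ι] {c f : ι → ℝ}

lemma dotProduct_nonneg_of_pos_iff (h : ∀ i, 0 < f i ↔ 0 < c i) : 0 ≤ c ⬝ᵥ f :=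
  sum_nonneg fun i _ => mul_nonneg_of_pos_iff (h i)

lemma dotProduct_pos_of_pos_iff (h : ∀ i, 0 < f i ↔ 0 < c i) (hc : ∃ i, 0 < c i) :
    0 < c ⬝ᵥ f := by
  obtain ⟨i, hi⟩ := hc
  exact sum_pos' (fun j _ => mul_nonneg_of_pos_iff (h j))
    ⟨i, mem_univ i, mul_pos hi ((h i).2 hi)⟩

end SignPattern

section ActiveSet

variable {ι κ : Type*} [Fintype ι] [Fintype κ] (W : Matrix ι κ ℝ) (b : ι → ℝ)

noncomputable def activeSet (x : κ → ℝ) : Finset ι := {i | 0 < W i ⬝ᵥ x + b i}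

variable {W b}

lemma mem_activeSet {x : κ → ℝ} {i : ι} :
    i ∈ activeSet W b x ↔ 0 < W i ⬝ᵥ x + b i := by
  simp [activeSet]

lemma eq_zero_of_vecMul_eq_zero_of_surjective_activeSet (h : Function.Surjective (activeSet W b))
    {c : ι → ℝ} (hc : c ᵥ* W = 0) : c = 0 := by
  have sign : ∀ d : ι → ℝ, d ᵥ* W = 0 → 0 ≤ d ⬝ᵥ b ∧ ((∃ i, 0 < d i) → 0 < d ⬝ᵥ b) := by
    intro d hd
    obtain ⟨x, hx⟩ := h {i | 0 < d i}
    have hsign : ∀ i, 0 < (W *ᵥ x + b) i ↔ 0 < d i := fun i => by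
      change 0 < W i ⬝ᵥ x + b i ↔ _
      rw [← mem_activeSet, hx, mem_filter]
      simp
    have hconst : d ⬝ᵥ (W *ᵥ x + b) = d ⬝ᵥ b := by
      rw [dotProduct_add, dotProduct_mulVec, hd, zero_dotProduct, zero_add]
    exact ⟨hconst ▸ dotProduct_nonneg_of_pos_iff hsign,
      fun hpos => hconst ▸ dotProduct_pos_of_pos_iff hsign hpos⟩
  obtain ⟨hc₁, hc₂⟩ := sign c hc
  obtain ⟨hn₁, hn₂⟩ := sign (-c) (by rw [neg_vecMul, hc, neg_zero])
  rw [neg_dotProduct] at hn₁ hn₂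
  have hcb : c ⬝ᵥ b = 0 := by linarith
  funext i
  by_contra hi
  rcases lt_or_gt_of_ne hi with hlt | hgt
  · exact (hn₂ ⟨i, by simpa using hlt⟩).ne' (by rw [hcb, neg_zero])
  · exact (hc₂ ⟨i, hgt⟩).ne' hcb

lemma card_le_card_of_surjective_activeSet (h : Function.Surjective (activeSet W b)) :
    Fintype.card ι ≤ Fintype.card κ := by
  have hinj : Function.Injective W.vecMulLinear := fun c₁ c₂ h₁₂ =>
    sub_eq_zero.1 <| eq_zero_of_vecMul_eq_zero_of_surjective_activeSet h <| by
      simpa [Matrix.sub_vecMul, sub_eq_zero] using h₁₂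
  simpa using LinearMap.finrank_le_finrank_of_injective hinj

variable (W b) in
noncomputable def activeSets : Finset (Finset ι) := (Set.range (activeSet W b)).toFinite.toFinset

lemma coe_activeSets : (activeSets W b : Set (Finset ι)) = Set.range (activeSet W b) :=
  Set.Finite.coe_toFinset _

variable [DecidableEq ι]

lemma card_le_of_shatters_activeSets {t : Finset ι} (ht : (activeSets W b).Shatters t) :
    #t ≤ Fintype.card κ := by
  have hsurj :
      Function.Surjective (activeSet (W.submatrix ((↑) : t → ι) id) (fun i => b i)) := by
    intro T
    obtain ⟨u, hu, htu⟩ := ht (t := T.map (Function.Embedding.subtype _)) fun i hi => by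
      obtain ⟨j, -, rfl⟩ := mem_map.1 hi
      exact j.2
    obtain ⟨x, rfl⟩ : u ∈ Set.range (activeSet W b) := by rwa [← coe_activeSets, mem_coe]
    refine ⟨x, Finset.ext fun i => ?_⟩
    have hi : 0 < W i ⬝ᵥ x + b i ↔ i ∈ T := by
      simpa [mem_activeSet] using congrArg (i.1 ∈ ·) htu
    exact mem_activeSet.trans hi
  simpa using card_le_card_of_surjective_activeSet hsurj

lemma card_activeSets_le :
    #(activeSets W b) ≤ ∑ k ∈ Iic (Fintype.card κ), (Fintype.card ι).choose k :=
  calc #(activeSets W b) ≤ #(activeSets W b).shatterer := card_le_card_shatterer _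
    _ ≤ ∑ k ∈ Iic (activeSets W b).vcDim, (Fintype.card ι).choose k :=
      card_shatterer_le_sum_vcDim
    _ ≤ ∑ k ∈ Iic (Fintype.card κ), (Fintype.card ι).choose k :=
      sum_le_sum_of_subset (Iic_subset_Iic.2 (Finset.sup_le fun _ hs =>
        card_le_of_shatters_activeSets (mem_shatterer.1 hs)))

end ActiveSet

lemma sig_eq_decide_mem_activeSet {n n' : ℕ} (W : Matrix (Fin n') (Fin n) ℝ) (b : Fin n' → ℝ) :
    sig W b = fun x i => decide (i ∈ activeSet W b x) := by
  ext x i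
  simp [sig, mem_activeSet]

lemma ncard_range_sig_le {n n' : ℕ} (W : Matrix (Fin n') (Fin n) ℝ) (b : Fin n' → ℝ) :
    (Set.range (sig W b)).ncard ≤ ∑ j ∈ range (n + 1), n'.choose j := by
  rw [sig_eq_decide_mem_activeSet, ← Function.comp_def (fun u i => decide (i ∈ u)),
    Set.range_comp, ← coe_activeSets]
  calc _ ≤ (activeSets W b : Set (Finset (Fin n'))).ncard := Set.ncard_image_le
    _ ≤ ∑ j ∈ range (n + 1), n'.choose j := by
      simpa [Set.ncard_coe_finset, Nat.range_succ_eq_Iic] using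
        card_activeSets_le (W := W) (b := b)

lemma tailSum_ite_eq (K i J : ℕ) :
    tailSum (fun j => if j = i then K else 0) J = if J ≤ i then K else 0 := by
  rw [tailSum, tsum_eq_single i fun j hj => by simp [hj]]
  simp

lemma hle_ite_eq {i i' K K' : ℕ} (hi : i ≤ i') (hK : K ≤ K') :
    hle (fun j => if j = i then K else 0) (fun j => if j = i' then K' else 0) := fun J => by
  rw [tailSum_ite_eq, tailSum_ite_eq]
  split_ifs <;> omega

lemma cnt_le {k : ℕ} (s : Fin k → Bool) : cnt s ≤ k :=
  (card_filter_le _ _).trans_eq (card_fin k)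

lemma actHist_eq_zero_of_lt {n' j : ℕ} (S : Set (Fin n' → Bool)) (hj : n' < j) :
    actHist n' S j = 0 := by
  have hempty : {s ∈ S | cnt s = j} = ∅ :=
    Set.eq_empty_of_forall_notMem fun s hs => (hs.2 ▸ cnt_le s).not_gt hj
  simp [actHist, hempty]

lemma sum_actHist {n' : ℕ} (S : Set (Fin n' → Bool)) :
    ∑ j ∈ range (n' + 1), actHist n' S j = S.ncard := by
  classical
  obtain ⟨F, rfl⟩ := S.toFinite.exists_finset_coe
  have hfib : ∀ j, actHist n' F j = #{s ∈ F | cnt s = j} := fun j => by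
    rw [actHist, ← Set.ncard_coe_finset, coe_filter]
    rfl
  simp only [hfib, Set.ncard_coe_finset]
  exact (card_eq_sum_card_fiberwise fun s _ => mem_range.2 (Nat.lt_succ_of_le (cnt_le s))).symm

lemma actHist_hle_of_ncard_le {n' K : ℕ} {S : Set (Fin n' → Bool)} (h : S.ncard ≤ K) :
    hle (actHist n' S) (fun j => if j = n' then K else 0) := fun J => by
  have hsupp : ∀ j ∉ range (n' + 1), (if J ≤ j then actHist n' S j else 0) = 0 := fun j hj => by
    rw [actHist_eq_zero_of_lt S (by simpa [Nat.lt_succ_iff] using hj), ite_self]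
  rw [tailSum_ite_eq, tailSum, tsum_eq_sum hsupp]
  split_ifs with hJ
  · calc _ ≤ ∑ j ∈ range (n' + 1), actHist n' S j :=
          sum_le_sum fun j _ => by split_ifs <;> simp
      _ ≤ K := (sum_actHist S).trans_le h
  · exact (sum_eq_zero fun j hj => if_neg (by simp at hj; omega)).le

/-- The Zaslavsky collection `γ` satisfies the bound condition, i.e. `γ ∈ Γ`. -/
theorem stmt17 : BoundCondition zasGamma := by
  refine ⟨fun n' n _ _ => ?_, fun n' _ => ?_, fun n n' _ _ _ W b => ?_,
    fun n' n m _ hnm _ => ?_⟩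
  · exact (Set.finite_singleton n').subset fun i hi => by_contra fun h => hi (if_neg h)
  · exact hle_ite_eq (Nat.zero_le n') (by simp)
  · exact actHist_hle_of_ncard_le (ncard_range_sig_le W b)
  · exact hle_ite_eq le_rfl (sum_le_sum_of_subset (range_subset_range.2 (by omega)))
end

section
/- For n, n' ∈ ℕ₊ with n ≥ n', the histogram Σ_{i=0}^{n'} C(n', i) e_i is the maximum of the activation histograms of all ReLU layer functions from ℝ^n to ℝ^{n'}; concretely, every h ∈ RL(n, n') satisfies ℋ_{n'}(𝒮_h) ≼ Σ_{i=0}^{n'} C(n', i) e_i, and there exists h ∈ RL(n, n') with ℋ_{n'}(𝒮_h) = Σ_{i=0}^{n'} C(n', i) e_i. -/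
open Matrix

/-!
A signature is a binary vector of length `n'`, so at most `C(n', j)` signatures have `j` active
units: the activation histogram is dominated entrywise by `∑ C(n', i) e_i`, hence also in `≼`.
Conversely, when `n ≥ n'` the preactivations of the layer reading off the first `n'` coordinates
can be given any signs, so all `2^{n'}` signatures occur.
-/

open Finset

lemma card_filter_cnt_eq_choose (k j : ℕ) :
    #{s : Fin k → Bool | cnt s = j} = k.choose j := by
  have hcard : #(powersetCard j (univ : Finset (Fin k))) = k.choose j := by simp
  rw [← hcard]
  refine card_bij' (fun s _ => ({i | s i = true} : Finset (Fin k)))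
    (fun A _ i => decide (i ∈ A)) ?_ ?_ ?_ ?_
  · intro s hs
    exact mem_powersetCard.2 ⟨subset_univ _, (mem_filter.1 hs).2⟩
  · intro A hA
    refine mem_filter.2 ⟨mem_univ _, ?_⟩
    simpa [cnt] using (mem_powersetCard.1 hA).2
  · intro s _
    funext i
    simp
  · intro A _
    ext i
    simp

lemma actHist_le_choose {k : ℕ} (S : Set (Fin k → Bool)) (j : ℕ) :
    actHist k S j ≤ k.choose j := by
  rw [actHist, ← card_filter_cnt_eq_choose, ← Set.ncard_coe_finset]
  exact Set.ncard_le_ncard (fun s hs => by simpa using hs.2)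

lemma actHist_univ (k : ℕ) : actHist k Set.univ = fun j => k.choose j := by
  funext j
  rw [actHist, ← card_filter_cnt_eq_choose, ← Set.ncard_coe_finset]
  simp

lemma hle_of_le {v w : ℕ → ℕ} (hw : (Function.support w).Finite) (hvw : v ≤ w) : hle v w := by
  intro J
  have htail : ∀ u : ℕ → ℕ, (Function.support u).Finite →
      Summable fun j => if J ≤ j then u j else 0 := fun u hu =>
    summable_of_hasFiniteSupport (hu.subset fun j hj => by
      simp only [Function.mem_support] at *
      split_ifs at hj <;> simp_all)
  have hv : (Function.support v).Finite := hw.subset fun j hj => by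
    simp only [Function.mem_support] at *
    have : v j ≤ w j := hvw j
    omega
  exact (htail v hv).tsum_le_tsum
    (fun j => by split_ifs <;> simp [hvw j]) (htail w hw)

lemma support_choose_finite (k : ℕ) : (Function.support fun j => k.choose j).Finite :=
  (range (k + 1)).finite_toSet.subset fun j hj => by
    by_contra h
    exact hj (Nat.choose_eq_zero_of_lt (by simpa using h))

lemma sum_range_ite_eq_choose (k j : ℕ) :
    (∑ i ∈ range (k + 1), if j = i then k.choose i else 0) = k.choose j := by
  rw [sum_ite_eq]
  split_ifs with h
  · rfl
  · exact (Nat.choose_eq_zero_of_lt (by simpa using h)).symm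

lemma range_sig_eq_univ {n n' : ℕ} {W : Matrix (Fin n') (Fin n) ℝ}
    (hW : Function.Surjective W.mulVec) (b : Fin n' → ℝ) :
    Set.range (sig W b) = Set.univ := by
  refine Set.eq_univ_of_forall fun s => ?_
  obtain ⟨x, hx⟩ := hW fun i => (if s i then 1 else -1) - b i
  refine ⟨x, funext fun i => ?_⟩
  have hi : W i ⬝ᵥ x = (if s i then 1 else -1) - b i := congrFun hx i
  cases h : s i <;> simp [sig, hi, h]

lemma surjective_mulVec_submatrix_one {R m n : Type*} [NonAssocSemiring R] [Fintype n]
    [DecidableEq n] {f : m → n} (hf : Function.Injective f) :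
    Function.Surjective ((1 : Matrix n n R).submatrix f id).mulVec := by
  have hmulVec : ∀ x, (1 : Matrix n n R).submatrix f id *ᵥ x = x ∘ f := fun x => by
    simpa using submatrix_mulVec_equiv (1 : Matrix n n R) x f (Equiv.refl n)
  simpa only [funext hmulVec] using hf.surjective_comp_right

theorem stmt18_general (n n' : ℕ) (hnn : n' ≤ n) :
    (∀ (W : Matrix (Fin n') (Fin n) ℝ) (b : Fin n' → ℝ),
      hle (actHist n' (Set.range (sig W b)))
        (fun j => ∑ i ∈ Finset.range (n' + 1), if j = i then n'.choose i else 0)) ∧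
    ∃ (W : Matrix (Fin n') (Fin n) ℝ) (b : Fin n' → ℝ),
      actHist n' (Set.range (sig W b)) =
        fun j => ∑ i ∈ Finset.range (n' + 1), if j = i then n'.choose i else 0 := by
  simp only [sum_range_ite_eq_choose]
  refine ⟨fun W b => hle_of_le (support_choose_finite n') (actHist_le_choose _), ?_⟩
  have hW := surjective_mulVec_submatrix_one (R := ℝ) (Fin.castLE_injective hnn)
  exact ⟨_, 0, by rw [range_sig_eq_univ hW, actHist_univ]⟩

/-- For `n ≥ n' ≥ 1`, the histogram `∑_{i=0}^{n'} C(n', i) e_i` is the maximum of the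
activation histograms over all ReLU layer functions in `RL(n, n')`: every
`h ∈ RL(n, n')` satisfies `ℋ_{n'}(𝒮_h) ≼ ∑_{i=0}^{n'} C(n', i) e_i`, and there is an
`h ∈ RL(n, n')` attaining it with equality. -/
theorem stmt18 (n n' : ℕ) (hn' : 0 < n') (hnn : n' ≤ n) :
    (∀ (W : Matrix (Fin n') (Fin n) ℝ) (b : Fin n' → ℝ),
      hle (actHist n' (Set.range (sig W b)))
        (fun j => ∑ i ∈ Finset.range (n' + 1), if j = i then n'.choose i else 0)) ∧
    ∃ (W : Matrix (Fin n') (Fin n) ℝ) (b : Fin n' → ℝ),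
      actHist n' (Set.range (sig W b)) =
        fun j => ∑ i ∈ Finset.range (n' + 1), if j = i then n'.choose i else 0 :=
  stmt18_general n n' hnn
end
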